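/- arXiv:2112.03758 — 2 statements merged into one kernel-verified Lean document; each statement's English description precedes it below -/
import Mathlib

section
/- Generalized Banachiewicz formula: if H = [[A, B], [B*, C]] is positive semidefinite Hermitian of maximal rank, then the Moore-Penrose inverse of H is H⁺ = [[A⁺ + A⁺ B (H/A)⁺ B* A⁺, −A⁺ B (H/A)⁺], [−(H/A)⁺ B* A⁺, (H/A)⁺]], where H/A = C − B* A⁺ B. -/
open Matrix ComplexOrder

/-- \`Ap\` satisfies the four Penrose equations for \`A\`, i.e. it is the Moore-Penrose
inverse of \`A\`. -/
def IsMoorePenrose {m n : Type*} [Fintype m] [Fintype n]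
    (A : Matrix m n ℂ) (Ap : Matrix n m ℂ) : Prop :=
  A * Ap * A = A ∧ Ap * A * Ap = Ap ∧ (A * Ap)ᴴ = A * Ap ∧ (Ap * A)ᴴ = Ap * A

/-- Uniqueness of the Moore–Penrose inverse. -/
lemma IsMoorePenrose.unique {m n : Type*} [Fintype m] [Fintype n]
    {A : Matrix m n ℂ} {X Y : Matrix n m ℂ}
    (hX : IsMoorePenrose A X) (hY : IsMoorePenrose A Y) : X = Y := by
  obtain ⟨hX1, hX2, hX3, hX4⟩ := hX
  obtain ⟨hY1, hY2, hY3, hY4⟩ := hY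
  have h1 : A * X = A * Y := by
    calc A * X = (A * X)ᴴ := hX3.symm
    _ = ((A * Y) * (A * X))ᴴ := by
        rw [show (A * Y) * (A * X) = (A * Y * A) * X by simp only [Matrix.mul_assoc], hY1]
    _ = (A * X)ᴴ * (A * Y)ᴴ := by rw [conjTranspose_mul]
    _ = (A * X) * (A * Y) := by rw [hX3, hY3]
    _ = (A * X * A) * Y := by simp only [Matrix.mul_assoc]
    _ = A * Y := by rw [hX1]
  have h2 : X * A = Y * A := by
    calc X * A = (X * A)ᴴ := hX4.symm
    _ = ((X * A) * (Y * A))ᴴ := by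
        rw [show (X * A) * (Y * A) = X * (A * Y * A) by simp only [Matrix.mul_assoc], hY1]
    _ = (Y * A)ᴴ * (X * A)ᴴ := by rw [conjTranspose_mul]
    _ = (Y * A) * (X * A) := by rw [hX4, hY4]
    _ = Y * (A * X * A) := by simp only [Matrix.mul_assoc]
    _ = Y * A := by rw [hX1]
  calc X = X * A * X := hX2.symm
  _ = (Y * A) * X := by rw [h2]
  _ = Y * (A * X) := by rw [Matrix.mul_assoc]
  _ = Y * (A * Y) := by rw [h1]
  _ = Y * A * Y := by rw [Matrix.mul_assoc]
  _ = Y := hY2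

lemma IsMoorePenrose.conjTranspose {m n : Type*} [Fintype m] [Fintype n]
    {A : Matrix m n ℂ} {X : Matrix n m ℂ}
    (h : IsMoorePenrose A X) : IsMoorePenrose Aᴴ Xᴴ := by
  obtain ⟨h1, h2, h3, h4⟩ := h
  refine ⟨?_, ?_, ?_, ?_⟩
  · rw [← conjTranspose_mul, ← conjTranspose_mul, ← Matrix.mul_assoc, h1]
  · rw [← conjTranspose_mul, ← conjTranspose_mul, ← Matrix.mul_assoc, h2]
  · rw [← conjTranspose_mul, conjTranspose_conjTranspose]
    exact h4.symm
  · rw [← conjTranspose_mul, conjTranspose_conjTranspose]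
    exact h3.symm

/-- If the kernel of `X` (as column kernels) is contained in that of `Y`, then `X * N = 0`
implies `Y * N = 0`. -/
lemma mul_eq_zero_of_ker_le {m n p q : Type*} [Fintype m] [Fintype n] [Fintype p]
    (X : Matrix m n ℂ) (Y : Matrix p n ℂ)
    (h : ∀ v, X *ᵥ v = 0 → Y *ᵥ v = 0)
    (N : Matrix n q ℂ) (hXN : X * N = 0) : Y * N = 0 := by
  ext i j
  have hv : X *ᵥ (fun r => N r j) = 0 := by
    ext s
    have := congrFun (congrFun hXN s) j
    simpa [Matrix.mul_apply, Matrix.mulVec, dotProduct] using this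
  have hY := h _ hv
  have := congrFun hY i
  simpa [Matrix.mul_apply, Matrix.mulVec, dotProduct] using this

/-- Subadditivity of matrix rank. -/
lemma Matrix.rank_add_le' {m n : Type*} [Fintype m] [Fintype n]
    (A B : Matrix m n ℂ) : (A + B).rank ≤ A.rank + B.rank := by
  have hle : LinearMap.range (A + B).mulVecLin ≤
      LinearMap.range A.mulVecLin ⊔ LinearMap.range B.mulVecLin := by
    rintro x ⟨v, rfl⟩
    rw [Matrix.mulVecLin_add]
    exact Submodule.add_mem_sup ⟨v, rfl⟩ ⟨v, rfl⟩
  calc (A + B).rank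
      ≤ Module.finrank ℂ
        ↑(LinearMap.range A.mulVecLin ⊔ LinearMap.range B.mulVecLin) :=
        Submodule.finrank_mono hle
    _ ≤ A.rank + B.rank := Submodule.finrank_add_le_finrank_add_finrank _ _

theorem generalized_banachiewicz {k l : ℕ}
    (A : Matrix (Fin k) (Fin k) ℂ) (B : Matrix (Fin k) (Fin l) ℂ)
    (C : Matrix (Fin l) (Fin l) ℂ)
    (Ap : Matrix (Fin k) (Fin k) ℂ) (Sp : Matrix (Fin l) (Fin l) ℂ)
    (hAp : IsMoorePenrose A Ap)
    (hSp : IsMoorePenrose (C - Bᴴ * Ap * B) Sp)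
    (hH : (Matrix.fromBlocks A B Bᴴ C).PosSemidef)
    (hrank : (Matrix.fromBlocks A B Bᴴ C).rank = A.rank + C.rank) :
    IsMoorePenrose (Matrix.fromBlocks A B Bᴴ C)
      (Matrix.fromBlocks (Ap + Ap * B * Sp * Bᴴ * Ap) (-(Ap * B * Sp))
        (-(Sp * Bᴴ * Ap)) Sp) := by
  set S : Matrix (Fin l) (Fin l) ℂ := C - Bᴴ * Ap * B with hSdef
  obtain ⟨hA1, hA2, hA3, hA4⟩ := hAp
  obtain ⟨hS1, hS2, hS3, hS4⟩ := hSp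
  -- Hermitian parts
  have hA_psd : A.PosSemidef := by
    have := hH.submatrix (Sum.inl : Fin k → Fin k ⊕ Fin l)
    have heq : (fromBlocks A B Bᴴ C).submatrix (Sum.inl : Fin k → Fin k ⊕ Fin l) Sum.inl = A := by
      ext i j; rfl
    rwa [heq] at this
  have hC_psd : C.PosSemidef := by
    have := hH.submatrix (Sum.inr : Fin l → Fin k ⊕ Fin l)
    have heq : (fromBlocks A B Bᴴ C).submatrix (Sum.inr : Fin l → Fin k ⊕ Fin l) Sum.inr = C := by
      ext i j; rfl
    rwa [heq] at this
  have hAh : Aᴴ = A := hA_psd.1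
  have hCh : Cᴴ = C := hC_psd.1
  have hAph : Apᴴ = Ap := by
    have h := IsMoorePenrose.conjTranspose ⟨hA1, hA2, hA3, hA4⟩
    rw [hAh] at h
    exact h.unique ⟨hA1, hA2, hA3, hA4⟩
  have hSh : Sᴴ = S := by
    rw [hSdef]
    simp [conjTranspose_sub, conjTranspose_mul, hCh, hAph, Matrix.mul_assoc]
  have hSph : Spᴴ = Sp := by
    have h := IsMoorePenrose.conjTranspose ⟨hS1, hS2, hS3, hS4⟩
    rw [hSh] at h
    exact h.unique ⟨hS1, hS2, hS3, hS4⟩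
  -- kernel inclusions from positive semidefiniteness
  have hkerAB : ∀ v, A *ᵥ v = 0 → Bᴴ *ᵥ v = 0 := by
    intro v hv
    have h0 : (fromBlocks A B Bᴴ C) *ᵥ (Sum.elim v 0) = 0 := by
      rw [← hH.dotProduct_mulVec_zero_iff]
      rw [fromBlocks_mulVec]
      simp [hv, dotProduct, Fintype.sum_sum_type]
    rw [fromBlocks_mulVec] at h0
    ext i
    simpa [hv] using congrFun h0 (Sum.inr i)
  have hkerCB : ∀ v, C *ᵥ v = 0 → B *ᵥ v = 0 := by
    intro v hv
    have h0 : (fromBlocks A B Bᴴ C) *ᵥ (Sum.elim 0 v) = 0 := by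
      rw [← hH.dotProduct_mulVec_zero_iff]
      rw [fromBlocks_mulVec]
      simp [hv, dotProduct, Fintype.sum_sum_type]
    rw [fromBlocks_mulVec] at h0
    ext i
    simpa [hv] using congrFun h0 (Sum.inl i)
  -- B is in the column space of A
  have hBApA : Bᴴ * Ap * A = Bᴴ := by
    have h0 : Bᴴ * (1 - Ap * A) = 0 := by
      refine mul_eq_zero_of_ker_le A Bᴴ hkerAB _ ?_
      rw [Matrix.mul_sub, Matrix.mul_one, ← Matrix.mul_assoc, hA1, sub_self]
    rw [Matrix.mul_sub, Matrix.mul_one, sub_eq_zero] at h0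
    rw [Matrix.mul_assoc]
    exact h0.symm
  have hAApB : A * Ap * B = B := by
    have h := congrArg Matrix.conjTranspose hBApA
    simp only [conjTranspose_mul, conjTranspose_conjTranspose, hAh, hAph] at h
    rw [← Matrix.mul_assoc] at h
    exact h
  -- Ap is PSD, S is PSD, Bᴴ Ap B is PSD
  have hAp_psd : Ap.PosSemidef := by
    have := hA_psd.conjTranspose_mul_mul_same Ap
    rwa [hAph, hA2] at this
  have hS_psd : S.PosSemidef := by
    set E : Matrix (Fin k ⊕ Fin l) (Fin l) ℂ :=
      fromRows (-(Ap * B)) (1 : Matrix (Fin l) (Fin l) ℂ) with hE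
    have hcalc : Eᴴ * (fromBlocks A B Bᴴ C) * E = S := by
      rw [hE, conjTranspose_fromRows_eq_fromCols_conjTranspose, Matrix.mul_assoc,
        fromBlocks_mul_fromRows, fromCols_mul_fromRows]
      have h1 : A * -(Ap * B) + B * (1 : Matrix (Fin l) (Fin l) ℂ) = 0 := by
        rw [Matrix.mul_neg, ← Matrix.mul_assoc, hAApB, Matrix.mul_one, neg_add_cancel]
      have h2 : Bᴴ * -(Ap * B) + C * (1 : Matrix (Fin l) (Fin l) ℂ) = S := by
        rw [Matrix.mul_neg, ← Matrix.mul_assoc, Matrix.mul_one, hSdef]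
        abel
      rw [h1, h2, Matrix.mul_zero, zero_add, conjTranspose_one, Matrix.one_mul]
    have := hH.conjTranspose_mul_mul_same E
    rwa [hcalc] at this
  have hBApB_psd : (Bᴴ * Ap * B).PosSemidef := hAp_psd.conjTranspose_mul_mul_same B
  have hCS : S + Bᴴ * Ap * B = C := by rw [hSdef]; abel
  -- ker C ⊆ ker S
  have hkerCS : ∀ v, C *ᵥ v = 0 → S *ᵥ v = 0 := by
    intro v hv
    have hsum : star v ⬝ᵥ (S *ᵥ v) + star v ⬝ᵥ ((Bᴴ * Ap * B) *ᵥ v) = 0 := by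
      rw [← dotProduct_add, ← add_mulVec, hCS, hv, dotProduct_zero]
    have h1 : star v ⬝ᵥ (S *ᵥ v) = 0 := by
      refine le_antisymm ?_ (hS_psd.dotProduct_mulVec_nonneg v)
      have hb := hBApB_psd.dotProduct_mulVec_nonneg v
      calc star v ⬝ᵥ (S *ᵥ v) ≤ star v ⬝ᵥ (S *ᵥ v) + star v ⬝ᵥ ((Bᴴ * Ap * B) *ᵥ v) :=
            le_add_of_nonneg_right hb
      _ = 0 := hsum
    exact (hS_psd.dotProduct_mulVec_zero_iff v).mp h1
  -- rank inequality : rank H ≤ rank A + rank S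
  have hrank_le : (fromBlocks A B Bᴴ C).rank ≤ A.rank + S.rank := by
    have hP : fromRows (1 : Matrix (Fin k) (Fin k) ℂ) (Bᴴ * Ap) * A *
        fromCols (1 : Matrix (Fin k) (Fin k) ℂ) (Ap * B) =
        fromBlocks A B Bᴴ (Bᴴ * Ap * B) := by
      rw [fromRows_mul, Matrix.one_mul, hBApA, fromRows_mul_fromCols, Matrix.mul_one,
        Matrix.mul_one, ← Matrix.mul_assoc, ← Matrix.mul_assoc, hAApB]
    have hQ : fromRows (0 : Matrix (Fin k) (Fin l) ℂ) (1 : Matrix (Fin l) (Fin l) ℂ) * S *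
        fromCols (0 : Matrix (Fin l) (Fin k) ℂ) (1 : Matrix (Fin l) (Fin l) ℂ) =
        fromBlocks 0 0 0 S := by
      rw [fromRows_mul, Matrix.zero_mul, Matrix.one_mul, fromRows_mul_fromCols,
        Matrix.zero_mul, Matrix.zero_mul, Matrix.mul_zero, Matrix.mul_one]
    have hdecomp : fromBlocks A B Bᴴ C =
        (fromRows (1 : Matrix (Fin k) (Fin k) ℂ) (Bᴴ * Ap) * A *
          fromCols (1 : Matrix (Fin k) (Fin k) ℂ) (Ap * B)) +
        (fromRows (0 : Matrix (Fin k) (Fin l) ℂ) (1 : Matrix (Fin l) (Fin l) ℂ) * S *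
          fromCols (0 : Matrix (Fin l) (Fin k) ℂ) (1 : Matrix (Fin l) (Fin l) ℂ)) := by
      rw [hP, hQ, fromBlocks_add, fromBlocks_inj]
      exact ⟨(add_zero A).symm, (add_zero B).symm, (add_zero Bᴴ).symm,
        by rw [← hCS]; abel⟩
    calc (fromBlocks A B Bᴴ C).rank
        ≤ (fromRows (1 : Matrix (Fin k) (Fin k) ℂ) (Bᴴ * Ap) * A *
            fromCols (1 : Matrix (Fin k) (Fin k) ℂ) (Ap * B)).rank +
          (fromRows (0 : Matrix (Fin k) (Fin l) ℂ) (1 : Matrix (Fin l) (Fin l) ℂ) * S *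
            fromCols (0 : Matrix (Fin l) (Fin k) ℂ) (1 : Matrix (Fin l) (Fin l) ℂ)).rank := by
          rw [hdecomp]; exact Matrix.rank_add_le' _ _
      _ ≤ A.rank + S.rank := by
          gcongr
          · exact le_trans (Matrix.rank_mul_le_left _ _) (Matrix.rank_mul_le_right _ _)
          · exact le_trans (Matrix.rank_mul_le_left _ _) (Matrix.rank_mul_le_right _ _)
  have hrankCS : C.rank ≤ S.rank := by
    have := hrank ▸ hrank_le
    omega
  -- ker S ⊆ ker B via ker S = ker C
  have hker_eq : LinearMap.ker C.mulVecLin = LinearMap.ker S.mulVecLin := by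
    have hle : LinearMap.ker C.mulVecLin ≤ LinearMap.ker S.mulVecLin := by
      intro v hv
      rw [LinearMap.mem_ker, mulVecLin_apply] at hv ⊢
      exact hkerCS v hv
    refine Submodule.eq_of_le_of_finrank_le hle ?_
    have e1 := LinearMap.finrank_range_add_finrank_ker C.mulVecLin
    have e2 := LinearMap.finrank_range_add_finrank_ker S.mulVecLin
    have hrc : C.rank = Module.finrank ℂ (LinearMap.range C.mulVecLin) := rfl
    have hrs : S.rank = Module.finrank ℂ (LinearMap.range S.mulVecLin) := rfl
    omega
  have hkerSB : ∀ v, S *ᵥ v = 0 → B *ᵥ v = 0 := by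
    intro v hv
    have : v ∈ LinearMap.ker C.mulVecLin := by
      rw [hker_eq, LinearMap.mem_ker, mulVecLin_apply]
      exact hv
    rw [LinearMap.mem_ker, mulVecLin_apply] at this
    exact hkerCB v this
  have hBSpS : B * Sp * S = B := by
    have h0 : B * (1 - Sp * S) = 0 := by
      refine mul_eq_zero_of_ker_le S B hkerSB _ ?_
      rw [Matrix.mul_sub, Matrix.mul_one, ← Matrix.mul_assoc, hS1, sub_self]
    rw [Matrix.mul_sub, Matrix.mul_one, sub_eq_zero] at h0
    rw [Matrix.mul_assoc]
    exact h0.symm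
  have hSSpB : S * Sp * Bᴴ = Bᴴ := by
    have h := congrArg Matrix.conjTranspose hBSpS
    simp only [conjTranspose_mul, conjTranspose_conjTranspose, hSh, hSph] at h
    rw [← Matrix.mul_assoc] at h
    exact h
  -- composite identities in right-associated form
  have hAApB' : ∀ {p : Type} (X : Matrix (Fin l) p ℂ), A * (Ap * (B * X)) = B * X := by
    intro p X
    rw [← Matrix.mul_assoc, ← Matrix.mul_assoc, hAApB]
  have hSSpB' : ∀ {p : Type} (X : Matrix (Fin k) p ℂ), S * (Sp * (Bᴴ * X)) = Bᴴ * X := by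
    intro p X
    rw [← Matrix.mul_assoc, ← Matrix.mul_assoc, hSSpB]
  have hBApA'' : Bᴴ * (Ap * A) = Bᴴ := by rw [← Matrix.mul_assoc]; exact hBApA
  have hBSpS'' : B * (Sp * S) = B := by rw [← Matrix.mul_assoc]; exact hBSpS
  have hAApB'' : A * (Ap * B) = B := by rw [← Matrix.mul_assoc]; exact hAApB
  have hSSpB'' : S * (Sp * Bᴴ) = Bᴴ := by rw [← Matrix.mul_assoc]; exact hSSpB
  have hA1' : A * (Ap * A) = A := by rw [← Matrix.mul_assoc]; exact hA1
  have hA2' : Ap * (A * Ap) = Ap := by rw [← Matrix.mul_assoc]; exact hA2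
  have hS1' : S * (Sp * S) = S := by rw [← Matrix.mul_assoc]; exact hS1
  have hS2' : Sp * (S * Sp) = Sp := by rw [← Matrix.mul_assoc]; exact hS2
  have hC' : C = S + Bᴴ * Ap * B := hCS.symm
  -- the two key products
  have hHX : (fromBlocks A B Bᴴ C) *
      (fromBlocks (Ap + Ap * B * Sp * Bᴴ * Ap) (-(Ap * B * Sp)) (-(Sp * Bᴴ * Ap)) Sp) =
      fromBlocks (A * Ap) 0 0 (S * Sp) := by
    rw [hC', fromBlocks_multiply, fromBlocks_inj]
    refine ⟨?_, ?_, ?_, ?_⟩ <;>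
      (try simp only [Matrix.mul_add, Matrix.add_mul, Matrix.mul_neg, Matrix.neg_mul, Matrix.mul_assoc, Matrix.zero_mul, Matrix.mul_zero,
        add_zero, zero_add, hAApB', hSSpB', hBApA'', hBSpS'', hAApB'', hSSpB'',
        hA1', hA2', hS1', hS2']) <;> (try abel)
  have hXH : (fromBlocks (Ap + Ap * B * Sp * Bᴴ * Ap) (-(Ap * B * Sp)) (-(Sp * Bᴴ * Ap)) Sp) *
      (fromBlocks A B Bᴴ C) = fromBlocks (Ap * A) 0 0 (Sp * S) := by
    rw [hC', fromBlocks_multiply, fromBlocks_inj]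
    refine ⟨?_, ?_, ?_, ?_⟩ <;>
      (try simp only [Matrix.mul_add, Matrix.add_mul, Matrix.mul_neg, Matrix.neg_mul, Matrix.mul_assoc, Matrix.zero_mul, Matrix.mul_zero,
        add_zero, zero_add, hAApB', hSSpB', hBApA'', hBSpS'', hAApB'', hSSpB'',
        hA1', hA2', hS1', hS2']) <;> (try abel)
  refine ⟨?_, ?_, ?_, ?_⟩
  · rw [hHX, hC', fromBlocks_multiply, fromBlocks_inj]
    refine ⟨?_, ?_, ?_, ?_⟩ <;>
      (try simp only [Matrix.mul_add, Matrix.add_mul, Matrix.mul_neg, Matrix.neg_mul, Matrix.mul_assoc, Matrix.zero_mul, Matrix.mul_zero,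
        add_zero, zero_add, hAApB', hSSpB', hBApA'', hBSpS'', hAApB'', hSSpB'',
        hA1', hA2', hS1', hS2']) <;> (try abel)
  · rw [hXH, fromBlocks_multiply, fromBlocks_inj]
    refine ⟨?_, ?_, ?_, ?_⟩ <;>
      (try simp only [Matrix.mul_add, Matrix.add_mul, Matrix.mul_neg, Matrix.neg_mul, Matrix.mul_assoc, Matrix.zero_mul, Matrix.mul_zero,
        add_zero, zero_add, hAApB', hSSpB', hBApA'', hBSpS'', hAApB'', hSSpB'',
        hA1', hA2', hS1', hS2']) <;> (try abel)
  · rw [hHX, fromBlocks_conjTranspose]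
    simp [hA3, hS3]
  · rw [hXH, fromBlocks_conjTranspose]
    simp [hA4, hS4]
end

section
/- If Hα = [[A, B], [B*, C]] and Hβ = [[C, D], [D*, E]] are positive semidefinite and of maximal rank, then the completion H = [[A, B, X], [B*, C, D], [X*, D*, E]] with X = B C⁺ D satisfies rank H = rank A + rank C + rank E. -/
open Matrix ComplexOrder

attribute [local instance] invertibleOne

/-- The 3×3 block matrix \`[[A, B, X], [Bᴴ, C, D], [Xᴴ, Dᴴ, E]]\`. -/
def threeBlock {a b c : ℕ} (A : Matrix (Fin a) (Fin a) ℂ) (B : Matrix (Fin a) (Fin b) ℂ)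
    (C : Matrix (Fin b) (Fin b) ℂ) (D : Matrix (Fin b) (Fin c) ℂ)
    (E : Matrix (Fin c) (Fin c) ℂ) (X : Matrix (Fin a) (Fin c) ℂ) :
    Matrix (Fin a ⊕ (Fin b ⊕ Fin c)) (Fin a ⊕ (Fin b ⊕ Fin c)) ℂ :=
  Matrix.fromBlocks A (Matrix.fromCols B X) (Matrix.fromRows Bᴴ Xᴴ)
    (Matrix.fromBlocks C D Dᴴ E)

/-- The product of two submodules is linearly equivalent to the product type. -/
def submoduleProdEquiv {R M N : Type*} [Semiring R] [AddCommMonoid M] [AddCommMonoid N]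
    [Module R M] [Module R N] (p : Submodule R M) (q : Submodule R N) :
    ↥(p.prod q) ≃ₗ[R] ↥p × ↥q where
  toFun x := (⟨x.1.1, x.2.1⟩, ⟨x.1.2, x.2.2⟩)
  invFun x := ⟨(x.1.1, x.2.1), ⟨x.1.2, x.2.2⟩⟩
  map_add' _ _ := rfl
  map_smul' _ _ := rfl
  left_inv _ := rfl
  right_inv _ := rfl

lemma range_prodMap' {R M N M' N' : Type*} [CommRing R] [AddCommGroup M] [AddCommGroup N]
    [AddCommGroup M'] [AddCommGroup N'] [Module R M] [Module R N] [Module R M'] [Module R N']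
    (f : M →ₗ[R] M') (g : N →ₗ[R] N') :
    LinearMap.range (f.prodMap g) = (LinearMap.range f).prod (LinearMap.range g) := by
  ext ⟨x, y⟩
  simp only [LinearMap.mem_range, Submodule.mem_prod, LinearMap.prodMap_apply, Prod.mk.injEq,
    Prod.exists]
  constructor
  · rintro ⟨u, v, h1, h2⟩
    exact ⟨⟨u, h1⟩, ⟨v, h2⟩⟩
  · rintro ⟨⟨u, h1⟩, ⟨v, h2⟩⟩
    exact ⟨u, v, h1, h2⟩

lemma rank_fromBlocks_diag {m n : Type*} [Fintype m] [Fintype n] [DecidableEq m] [DecidableEq n]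
    (A : Matrix m m ℂ) (D : Matrix n n ℂ) :
    (Matrix.fromBlocks A 0 0 D).rank = A.rank + D.rank := by
  classical
  set e := LinearEquiv.sumArrowLequivProdArrow m n ℂ ℂ with he
  have hf : (Matrix.fromBlocks A 0 0 D).mulVecLin
      = e.symm.toLinearMap ∘ₗ ((A.mulVecLin.prodMap D.mulVecLin) ∘ₗ e.toLinearMap) := by
    apply LinearMap.ext
    intro v
    funext i
    cases i with
    | inl i =>
      simp [he, Matrix.fromBlocks_mulVec, Matrix.mulVecLin_apply,
        LinearEquiv.sumArrowLequivProdArrow, Equiv.sumArrowEquivProdArrow]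
    | inr i =>
      simp [he, Matrix.fromBlocks_mulVec, Matrix.mulVecLin_apply,
        LinearEquiv.sumArrowLequivProdArrow, Equiv.sumArrowEquivProdArrow]
  have h1 : LinearMap.range ((Matrix.fromBlocks A 0 0 D).mulVecLin)
      = Submodule.map (e.symm : ((m → ℂ) × (n → ℂ)) →ₗ[ℂ] (m ⊕ n → ℂ))
        (LinearMap.range (A.mulVecLin.prodMap D.mulVecLin)) := by
    rw [hf, LinearMap.range_comp, LinearMap.range_comp_of_range_eq_top _ e.range]
  rw [Matrix.rank, h1, LinearEquiv.finrank_map_eq e.symm, range_prodMap', Matrix.rank, Matrix.rank]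
  rw [(submoduleProdEquiv _ _).finrank_eq, Module.finrank_prod]

/-- Uniqueness of the Moore-Penrose inverse (square case). -/
lemma mp_unique {n : Type*} [Fintype n] (A P Q : Matrix n n ℂ)
    (hP : IsMoorePenrose A P) (hQ : IsMoorePenrose A Q) : P = Q := by
  obtain ⟨p1, p2, p3, p4⟩ := hP
  obtain ⟨q1, q2, q3, q4⟩ := hQ
  have hAPQ : A * P = A * Q := by
    calc A * P = (A * P)ᴴ := p3.symm
    _ = Pᴴ * Aᴴ := by rw [conjTranspose_mul]
    _ = Pᴴ * (A * Q * A)ᴴ := by rw [q1]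
    _ = Pᴴ * (Aᴴ * (A * Q)ᴴ) := by rw [conjTranspose_mul (A * Q) A]
    _ = Pᴴ * (Aᴴ * (A * Q)) := by rw [q3]
    _ = (Pᴴ * Aᴴ) * (A * Q) := by rw [Matrix.mul_assoc]
    _ = (A * P)ᴴ * (A * Q) := by rw [conjTranspose_mul]
    _ = (A * P) * (A * Q) := by rw [p3]
    _ = (A * P * A) * Q := by simp only [Matrix.mul_assoc]
    _ = A * Q := by rw [p1]
  have hPQA : P * A = Q * A := by
    calc P * A = (P * A)ᴴ := p4.symm
    _ = Aᴴ * Pᴴ := by rw [conjTranspose_mul]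
    _ = (A * (Q * A))ᴴ * Pᴴ := by rw [← Matrix.mul_assoc, q1]
    _ = ((Q * A)ᴴ * Aᴴ) * Pᴴ := by rw [conjTranspose_mul A (Q * A)]
    _ = ((Q * A) * Aᴴ) * Pᴴ := by rw [q4]
    _ = (Q * A) * (Aᴴ * Pᴴ) := by rw [Matrix.mul_assoc]
    _ = (Q * A) * (P * A)ᴴ := by rw [conjTranspose_mul]
    _ = (Q * A) * (P * A) := by rw [p4]
    _ = Q * (A * P * A) := by simp only [Matrix.mul_assoc]
    _ = Q * A := by rw [p1]
  calc P = P * A * P := p2.symm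
  _ = Q * A * P := by rw [hPQA]
  _ = Q * (A * P) := by rw [Matrix.mul_assoc]
  _ = Q * (A * Q) := by rw [hAPQ]
  _ = Q * A * Q := by rw [Matrix.mul_assoc]
  _ = Q := q2

/-- The Moore-Penrose inverse of a Hermitian matrix is Hermitian. -/
lemma mp_conjTranspose {n : Type*} [Fintype n] (C Cp : Matrix n n ℂ)
    (hC : Cᴴ = C) (hCp : IsMoorePenrose C Cp) : Cpᴴ = Cp := by
  refine mp_unique C Cpᴴ Cp ?_ hCp
  obtain ⟨p1, p2, p3, p4⟩ := hCp
  have h5 : C * Cpᴴ = Cp * C := by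
    calc C * Cpᴴ = Cᴴ * Cpᴴ := by rw [hC]
    _ = (Cp * C)ᴴ := by rw [← conjTranspose_mul]
    _ = Cp * C := p4
  have h6 : Cpᴴ * C = C * Cp := by
    calc Cpᴴ * C = Cpᴴ * Cᴴ := by rw [hC]
    _ = (C * Cp)ᴴ := by rw [← conjTranspose_mul]
    _ = C * Cp := p3
  refine ⟨?_, ?_, ?_, ?_⟩
  · calc C * Cpᴴ * C = (Cp * C) * C := by rw [h5]
    _ = ((Cp * C) * C)ᴴᴴ := by rw [conjTranspose_conjTranspose]
    _ = (Cᴴ * (Cp * C)ᴴ)ᴴ := by rw [conjTranspose_mul]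
    _ = (Cᴴ * (Cp * C))ᴴ := by rw [p4]
    _ = (C * (Cp * C))ᴴ := by rw [hC]
    _ = (C * Cp * C)ᴴ := by rw [Matrix.mul_assoc]
    _ = Cᴴ := by rw [p1]
    _ = C := hC
  · calc Cpᴴ * C * Cpᴴ = (C * Cp) * Cpᴴ := by rw [h6]
    _ = ((C * Cp) * Cpᴴ)ᴴᴴ := by rw [conjTranspose_conjTranspose]
    _ = (Cpᴴᴴ * (C * Cp)ᴴ)ᴴ := by rw [conjTranspose_mul]
    _ = (Cp * (C * Cp))ᴴ := by rw [conjTranspose_conjTranspose, p3]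
    _ = (Cp * C * Cp)ᴴ := by rw [Matrix.mul_assoc]
    _ = Cpᴴ := by rw [p2]
  · rw [h5]; exact p4
  · rw [h6]; exact p3

/-- If `Nᴴ * N = C` and `Cp` behaves like a pseudoinverse of `C`, then `C * Cp` fixes `Nᴴ`. -/
lemma proj_fix {k n : Type*} [Fintype k] [Fintype n] (N : Matrix k n ℂ) (C Cp : Matrix n n ℂ)
    (hC : Nᴴ * N = C) (h1 : C * Cp * C = C) (h3 : (C * Cp)ᴴ = C * Cp) :
    C * Cp * Nᴴ = Nᴴ := by
  have key : C * Cp * Nᴴ * N = C := by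
    rw [Matrix.mul_assoc (C * Cp) Nᴴ N, hC, h1]
  have hz : (Nᴴ - C * Cp * Nᴴ) * (Nᴴ - C * Cp * Nᴴ)ᴴ = 0 := by
    have e1 : (C * Cp * Nᴴ)ᴴ = N * (C * Cp) := by
      rw [conjTranspose_mul, h3, conjTranspose_conjTranspose]
    rw [conjTranspose_sub, e1, conjTranspose_conjTranspose, Matrix.sub_mul, Matrix.mul_sub,
      Matrix.mul_sub, ← Matrix.mul_assoc Nᴴ N (C * Cp), hC,
      ← Matrix.mul_assoc (C * Cp * Nᴴ) N (C * Cp), key, sub_self]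
  have := Matrix.self_mul_conjTranspose_eq_zero.mp hz
  rw [sub_eq_zero] at this
  exact this.symm

/-- Block equations from a Gram decomposition of a 2×2 block matrix. -/
lemma blocks_of_decomp {m n : Type*} [Fintype m] [Fintype n] [DecidableEq m] [DecidableEq n]
    (A : Matrix m m ℂ) (B : Matrix m n ℂ) (B' : Matrix n m ℂ) (C : Matrix n n ℂ)
    (M : Matrix (m ⊕ n) (m ⊕ n) ℂ)
    (h : Matrix.fromBlocks A B B' C = Mᴴ * M) :
    A = M.toCols₁ᴴ * M.toCols₁ ∧ B = M.toCols₁ᴴ * M.toCols₂ ∧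
      B' = M.toCols₂ᴴ * M.toCols₁ ∧ C = M.toCols₂ᴴ * M.toCols₂ := by
  have hM : M = Matrix.fromCols M.toCols₁ M.toCols₂ := (fromCols_toCols M).symm
  rw [hM, conjTranspose_fromCols_eq_fromRows_conjTranspose, fromRows_mul_fromCols,
    Matrix.fromBlocks_inj] at h
  exact ⟨h.1, h.2.1, h.2.2.1, h.2.2.2⟩

theorem completion_rank_eq {a b c : ℕ}
    (A : Matrix (Fin a) (Fin a) ℂ) (B : Matrix (Fin a) (Fin b) ℂ)
    (C : Matrix (Fin b) (Fin b) ℂ) (D : Matrix (Fin b) (Fin c) ℂ)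
    (E : Matrix (Fin c) (Fin c) ℂ) (Cp : Matrix (Fin b) (Fin b) ℂ)
    (hCp : IsMoorePenrose C Cp)
    (hα : (Matrix.fromBlocks A B Bᴴ C).PosSemidef)
    (hαr : (Matrix.fromBlocks A B Bᴴ C).rank = A.rank + C.rank)
    (hβ : (Matrix.fromBlocks C D Dᴴ E).PosSemidef)
    (hβr : (Matrix.fromBlocks C D Dᴴ E).rank = C.rank + E.rank) :
    (threeBlock A B C D E (B * Cp * D)).rank = A.rank + C.rank + E.rank := by
  classical
  obtain ⟨c1, c2, c3, c4⟩ := hCp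
  -- decompositions
  obtain ⟨Mα, hMα⟩ : ∃ M : Matrix (Fin a ⊕ Fin b) (Fin a ⊕ Fin b) ℂ, _ = Mᴴ * M := by
    open MatrixOrder in exact CStarAlgebra.nonneg_iff_eq_star_mul_self.mp hα.nonneg
  obtain ⟨-, hBα, -, hCα⟩ := blocks_of_decomp A B Bᴴ C Mα hMα
  obtain ⟨Mβ, hMβ⟩ : ∃ M : Matrix (Fin b ⊕ Fin c) (Fin b ⊕ Fin c) ℂ, _ = Mᴴ * M := by
    open MatrixOrder in exact CStarAlgebra.nonneg_iff_eq_star_mul_self.mp hβ.nonneg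
  obtain ⟨hCβ, hDβ, -, -⟩ := blocks_of_decomp C D Dᴴ E Mβ hMβ
  have hCherm : Cᴴ = C := by
    rw [hCα, conjTranspose_mul, conjTranspose_conjTranspose]
  have hCpH : Cpᴴ = Cp := mp_conjTranspose C Cp hCherm ⟨c1, c2, c3, c4⟩
  have hcomm : Cp * C = C * Cp := by
    calc Cp * C = Cpᴴ * Cᴴ := by rw [hCpH, hCherm]
    _ = (C * Cp)ᴴ := (conjTranspose_mul C Cp).symm
    _ = C * Cp := c3
  -- range conditions
  have r1 : C * Cp * Bᴴ = Bᴴ := by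
    have pf := proj_fix Mα.toCols₂ C Cp hCα.symm c1 c3
    have hBH : Bᴴ = Mα.toCols₂ᴴ * Mα.toCols₁ := by
      rw [hBα, conjTranspose_mul, conjTranspose_conjTranspose]
    rw [hBH, ← Matrix.mul_assoc, pf]
  have r2 : B * Cp * C = B := by
    calc B * Cp * C = B * (Cp * C) := by rw [Matrix.mul_assoc]
    _ = B * (C * Cp) := by rw [hcomm]
    _ = Bᴴᴴ * (C * Cp)ᴴ := by rw [conjTranspose_conjTranspose, c3]
    _ = (C * Cp * Bᴴ)ᴴ := (conjTranspose_mul (C * Cp) Bᴴ).symm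
    _ = Bᴴᴴ := by rw [r1]
    _ = B := conjTranspose_conjTranspose B
  have r3 : C * Cp * D = D := by
    have pf := proj_fix Mβ.toCols₁ C Cp hCβ.symm c1 c3
    rw [hDβ, ← Matrix.mul_assoc, pf]
  have r4 : Dᴴ * Cp * C = Dᴴ := by
    calc Dᴴ * Cp * C = Dᴴ * (Cp * C) := by rw [Matrix.mul_assoc]
    _ = Dᴴ * (C * Cp) := by rw [hcomm]
    _ = Dᴴ * (C * Cp)ᴴ := by rw [c3]
    _ = (C * Cp * D)ᴴ := (conjTranspose_mul (C * Cp) D).symm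
    _ = Dᴴ := by rw [r3]
  -- Schur complements
  set S := A - B * Cp * Bᴴ with hS
  set T := E - Dᴴ * Cp * D with hT
  -- Guttman rank additivity for Hα
  have hSrank : S.rank = A.rank := by
    have hPinv : Invertible (Matrix.fromBlocks (1 : Matrix (Fin a) (Fin a) ℂ) (0 : Matrix (Fin a) (Fin b) ℂ) (Cp * Bᴴ) (1 : Matrix (Fin b) (Fin b) ℂ)) :=
      Matrix.fromBlocksZero₁₂Invertible (1 : Matrix (Fin a) (Fin a) ℂ) (Cp * Bᴴ) (1 : Matrix (Fin b) (Fin b) ℂ)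
    set P := Matrix.fromBlocks (1 : Matrix (Fin a) (Fin a) ℂ) (0 : Matrix (Fin a) (Fin b) ℂ) (Cp * Bᴴ) (1 : Matrix (Fin b) (Fin b) ℂ) with hPdef
    have hdet : IsUnit P.det := Matrix.isUnit_det_of_invertible P
    have hdetH : IsUnit Pᴴ.det := by
      rw [Matrix.det_conjTranspose]; exact hdet.star
    have hPH : Pᴴ = Matrix.fromBlocks 1 (B * Cp) 0 1 := by
      simp only [hPdef, Matrix.fromBlocks_conjTranspose, conjTranspose_mul, hCpH,
        conjTranspose_conjTranspose, conjTranspose_one, conjTranspose_zero]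
    have hcongr : Pᴴ * (Matrix.fromBlocks S 0 0 C) * P = Matrix.fromBlocks A B Bᴴ C := by
      rw [hPH, hPdef, Matrix.fromBlocks_multiply, Matrix.fromBlocks_multiply]
      simp only [Matrix.one_mul, Matrix.mul_one, Matrix.mul_zero, Matrix.zero_mul,
        add_zero, zero_add]
      rw [r2, Matrix.fromBlocks_inj]
      refine ⟨?_, rfl, ?_, rfl⟩
      · rw [← Matrix.mul_assoc B Cp Bᴴ, hS, sub_add_cancel]
      · rw [← Matrix.mul_assoc C Cp Bᴴ, r1]
    have : (Matrix.fromBlocks A B Bᴴ C).rank = S.rank + C.rank := by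
      rw [← hcongr, Matrix.rank_mul_eq_left_of_isUnit_det P _ hdet,
        Matrix.rank_mul_eq_right_of_isUnit_det Pᴴ _ hdetH, rank_fromBlocks_diag]
    omega
  -- Guttman rank additivity for Hβ
  have hTrank : T.rank = E.rank := by
    have hPinv : Invertible (Matrix.fromBlocks (1 : Matrix (Fin b) (Fin b) ℂ) (Cp * D) (0 : Matrix (Fin c) (Fin b) ℂ) (1 : Matrix (Fin c) (Fin c) ℂ)) :=
      Matrix.fromBlocksZero₂₁Invertible (1 : Matrix (Fin b) (Fin b) ℂ) (Cp * D) (1 : Matrix (Fin c) (Fin c) ℂ)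
    set P := Matrix.fromBlocks (1 : Matrix (Fin b) (Fin b) ℂ) (Cp * D) (0 : Matrix (Fin c) (Fin b) ℂ) (1 : Matrix (Fin c) (Fin c) ℂ) with hPdef
    have hdet : IsUnit P.det := Matrix.isUnit_det_of_invertible P
    have hdetH : IsUnit Pᴴ.det := by
      rw [Matrix.det_conjTranspose]; exact hdet.star
    have hPH : Pᴴ = Matrix.fromBlocks 1 0 (Dᴴ * Cp) 1 := by
      simp only [hPdef, Matrix.fromBlocks_conjTranspose, conjTranspose_mul, hCpH,
        conjTranspose_one, conjTranspose_zero]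
    have hcongr : Pᴴ * (Matrix.fromBlocks C 0 0 T) * P = Matrix.fromBlocks C D Dᴴ E := by
      rw [hPH, hPdef, Matrix.fromBlocks_multiply, Matrix.fromBlocks_multiply]
      simp only [Matrix.one_mul, Matrix.mul_one, Matrix.mul_zero, Matrix.zero_mul,
        add_zero, zero_add]
      have hE : Dᴴ * Cp * D + T = E := by rw [hT]; abel
      rw [r4, ← Matrix.mul_assoc C Cp D, r3, ← Matrix.mul_assoc Dᴴ Cp D, hE]
    have : (Matrix.fromBlocks C D Dᴴ E).rank = C.rank + T.rank := by
      rw [← hcongr, Matrix.rank_mul_eq_left_of_isUnit_det P _ hdet,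
        Matrix.rank_mul_eq_right_of_isUnit_det Pᴴ _ hdetH, rank_fromBlocks_diag]
    omega
  -- the big congruence
  set L := Matrix.fromRows (Cp * Bᴴ) (0 : Matrix (Fin c) (Fin a) ℂ) with hL
  set Nq := Matrix.fromBlocks (1 : Matrix (Fin b) (Fin b) ℂ) (Cp * D) (0 : Matrix (Fin c) (Fin b) ℂ) (1 : Matrix (Fin c) (Fin c) ℂ) with hNq
  haveI hNinv : Invertible Nq := Matrix.fromBlocksZero₂₁Invertible (1 : Matrix (Fin b) (Fin b) ℂ) (Cp * D) (1 : Matrix (Fin c) (Fin c) ℂ)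
  haveI hQinv : Invertible (Matrix.fromBlocks (1 : Matrix (Fin a) (Fin a) ℂ) (0 : Matrix (Fin a) (Fin b ⊕ Fin c) ℂ) L Nq) :=
    Matrix.fromBlocksZero₁₂Invertible (1 : Matrix (Fin a) (Fin a) ℂ) L Nq
  set Q := Matrix.fromBlocks (1 : Matrix (Fin a) (Fin a) ℂ) (0 : Matrix (Fin a) (Fin b ⊕ Fin c) ℂ) L Nq with hQdef
  set K := Matrix.fromBlocks S (0 : Matrix (Fin a) (Fin b ⊕ Fin c) ℂ) (0 : Matrix (Fin b ⊕ Fin c) (Fin a) ℂ) (Matrix.fromBlocks C (0 : Matrix (Fin b) (Fin c) ℂ) (0 : Matrix (Fin c) (Fin b) ℂ) T) with hK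
  have hdet : IsUnit Q.det := Matrix.isUnit_det_of_invertible Q
  have hdetH : IsUnit Qᴴ.det := by
    rw [Matrix.det_conjTranspose]; exact hdet.star
  have hLH : Lᴴ = Matrix.fromCols (B * Cp) 0 := by
    rw [hL, conjTranspose_fromRows_eq_fromCols_conjTranspose, conjTranspose_mul, hCpH,
      conjTranspose_conjTranspose, conjTranspose_zero]
  have hNH : Nqᴴ = Matrix.fromBlocks 1 0 (Dᴴ * Cp) 1 := by
    simp only [hNq, Matrix.fromBlocks_conjTranspose, conjTranspose_mul, hCpH,
      conjTranspose_one, conjTranspose_zero]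
  have hQH : Qᴴ = Matrix.fromBlocks 1 Lᴴ 0 Nqᴴ := by
    simp only [hQdef, Matrix.fromBlocks_conjTranspose, conjTranspose_one, conjTranspose_zero]
  have hQK : Qᴴ * K = Matrix.fromBlocks S (Matrix.fromCols B 0) 0
      (Matrix.fromBlocks C 0 Dᴴ T) := by
    rw [hQH, hK, Matrix.fromBlocks_multiply]
    simp only [Matrix.one_mul, Matrix.mul_one, Matrix.mul_zero, Matrix.zero_mul,
      add_zero, zero_add]
    rw [hLH, hNH, Matrix.fromCols_mul_fromBlocks, Matrix.fromBlocks_multiply]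
    simp only [Matrix.one_mul, Matrix.mul_one, Matrix.mul_zero, Matrix.zero_mul,
      add_zero, zero_add]
    rw [r2, r4, Matrix.fromBlocks_inj]
    refine ⟨rfl, rfl, rfl, rfl⟩
  have hQKQ : Qᴴ * K * Q = threeBlock A B C D E (B * Cp * D) := by
    rw [hQK, hQdef, Matrix.fromBlocks_multiply]
    simp only [Matrix.one_mul, Matrix.mul_one, Matrix.mul_zero, Matrix.zero_mul,
      add_zero, zero_add]
    rw [hL, hNq, Matrix.fromCols_mul_fromRows, Matrix.fromCols_mul_fromBlocks,
      Matrix.fromBlocks_mul_fromRows, Matrix.fromBlocks_multiply]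
    simp only [Matrix.one_mul, Matrix.mul_one, Matrix.mul_zero, Matrix.zero_mul,
      add_zero, zero_add]
    rw [threeBlock, Matrix.fromBlocks_inj]
    refine ⟨?_, ?_, ?_, ?_⟩
    · rw [← Matrix.mul_assoc B Cp Bᴴ, hS, sub_add_cancel]
    · rw [← Matrix.mul_assoc B Cp D]
    · rw [← Matrix.mul_assoc C Cp Bᴴ, r1, ← Matrix.mul_assoc Dᴴ Cp Bᴴ]
      congr 1
      rw [conjTranspose_mul, conjTranspose_mul, hCpH, Matrix.mul_assoc]
    · have hE : Dᴴ * Cp * D + T = E := by rw [hT]; abel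
      rw [← Matrix.mul_assoc C Cp D, r3, ← Matrix.mul_assoc Dᴴ Cp D, hE]
  rw [← hQKQ, Matrix.rank_mul_eq_left_of_isUnit_det Q _ hdet,
    Matrix.rank_mul_eq_right_of_isUnit_det Qᴴ _ hdetH, hK, rank_fromBlocks_diag,
    rank_fromBlocks_diag, hSrank, hTrank]
  omega
end
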